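/- Fix γ > 1. Let ρ₁, ρ₂, β₁, β₂ be positive reals and u₁, u₂ reals. Define sᵢ = −log βᵢ − (γ−1) log ρᵢ − log 2 and entropy variables wᵢ = (γ/(γ−1) − sᵢ/(γ−1) − βᵢuᵢ², 2βᵢuᵢ, −2βᵢ). Write Δa = a₂ − a₁, ā = (a₁+a₂)/2, m̄ = (ρ₁u₁+ρ₂u₂)/2, q̄ = (u₁²+u₂²)/2, and let ρ̂, β̂ be the logarithmic means of (ρ₁,ρ₂) and (β₁,β₂). Define the convective flux f = (f¹, f², f³) with f¹ = m̄, f² = ū·m̄ + ρ̄/(2β̄), f³ = m̄/(2(γ−1)β̂) − (q̄/2)·m̄ + ū²·m̄ + (ρ̄/(2β̄))·ū, the artificial-diffusion coefficient λ = |ū|·max(1/2, |log ρ₂ − log ρ₁|) + |Δu|/4, and the artificial-diffusion flux g = (g¹, g², g³) with g¹ = λΔρ, g² = λΔ(ρu), g³ = λ( 𝔭/(γ−1) + (1/2)Δ(ρu²) + (ū² − q̄)Δρ ), where 𝔭 = Δρ/(2β̂) + (ρ̄/2)Δ(1/β). Then Tadmor's entropy-stability (shuffle) condition holds: (w₂−w₁)·(f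 − g) ≤ Δ(ρu), where Δ(ρu) = ρ₂u₂ − ρ₁u₁ is the jump of the entropy potential. -/
import Mathlib

set_option maxHeartbeats 1000000
set_option maxHeartbeats 1000000

/-- The logarithmic mean of two positive reals: `(b-a)/(log b - log a)` when `a ≠ b`,
and `a` when `a = b`. -/
noncomputable def logMean (a b : ℝ) : ℝ :=
  if a = b then a else (b - a) / (Real.log b - Real.log a)

private lemma exp_lb' {x : ℝ} (hx : 0 ≤ x) : 1 + 2*x + 2*x^2 + 4/3*x^3 ≤ Real.exp (2*x) := by
  have h := Real.sum_le_exp_of_nonneg (by linarith : (0:ℝ) ≤ 2*x) 4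
  norm_num [Finset.sum_range_succ, Nat.factorial] at h
  linarith

private lemma exp_ub' {x : ℝ} (hx : 0 ≤ x) (hx1 : 2*x ≤ 1) :
    Real.exp (2*x) ≤ 1 + 2*x + 2*x^2 + 4/3*x^3 + 5/6*x^4 := by
  have h := Real.exp_bound' (by linarith : (0:ℝ) ≤ 2*x) hx1 (n := 4) (by norm_num)
  norm_num [Finset.sum_range_succ, Nat.factorial] at h
  linarith

private lemma logMean_comm (a b : ℝ) : logMean a b = logMean b a := by
  unfold logMean
  rcases eq_or_ne a b with h | h
  · simp [h]
  · rw [if_neg h, if_neg (Ne.symm h), ← neg_sub b a, ← neg_sub (Real.log b), neg_div_neg_eq]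

private lemma logMean_pos {a b : ℝ} (ha : 0 < a) (hb : 0 < b) : 0 < logMean a b := by
  unfold logMean
  split_ifs with h
  · exact ha
  · rcases lt_or_gt_of_ne h with hab | hab
    · have hl := Real.log_lt_log ha hab
      exact div_pos (by linarith) (by linarith)
    · have hl := Real.log_lt_log hb hab
      exact div_pos_of_neg_of_neg (by linarith) (by linarith)

private lemma logMean_mul {a b : ℝ} (ha : 0 < a) (hb : 0 < b) :
    (Real.log b - Real.log a) * logMean a b = b - a := by
  unfold logMean
  split_ifs with h
  · simp [h]
  · have hne : Real.log b - Real.log a ≠ 0 := by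
      rcases lt_or_gt_of_ne h with hab | hab
      · have := Real.log_lt_log ha hab; intro h0; linarith
      · have := Real.log_lt_log hb hab; intro h0; linarith
    field_simp

private lemma close_aux {a b t L : ℝ} (ha : 0 < a) (ht : 0 < t)
    (hexp : Real.exp t = b / a) (hTL : t * L = b - a) (hL : 0 < L) :
    |(a + b) / 2 - L| ≤ max (1/2) t * t * L := by
  set M := max (1/2) t with hM
  have hM1 : (1:ℝ)/2 ≤ M := le_max_left _ _
  have hM2 : t ≤ M := le_max_right _ _
  have htL : 0 < t * L := mul_pos ht hL
  -- b ≥ a * (cubic lower bound of exp t)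
  have hlb := exp_lb' (x := t/2) (by linarith)
  rw [show 2*(t/2) = t by ring, hexp] at hlb
  have hba : (1 + t + 2*(t/2)^2 + 4/3*(t/2)^3) * a ≤ b := (le_div_iff₀ ha).mp hlb
  -- lower bound on L
  have hL2 : a * (1 + t/2 + t^2/6) ≤ L := by
    have h1 : t * (a * (1 + t/2 + t^2/6)) ≤ t * L := by nlinarith [hba, hTL]
    exact le_of_mul_le_mul_left h1 ht
  -- t^2/4 * L ≤ M * t * L
  have h4 : t^2/4 * L ≤ M * t * L := by
    rcases le_total t 2 with h | h
    · nlinarith [mul_nonneg (sub_nonneg.mpr hM1) htL.le, mul_nonneg (sub_nonneg.mpr h) htL.le]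
    · nlinarith [mul_nonneg (sub_nonneg.mpr hM2) htL.le, mul_pos (mul_pos ht ht) hL]
  -- upper part
  have hpos : (0:ℝ) < 1 - t/2 + t^2/4 := by nlinarith [sq_nonneg (t - 2)]
  have hup : (a + b)/2 - L ≤ M * t * L := by
    have h2 : a * ((1 + t/2 + t^2/6) * (1 - t/2 + t^2/4)) ≤ L * (1 - t/2 + t^2/4) := by
      nlinarith [mul_le_mul_of_nonneg_right hL2 hpos.le]
    have h3 : a ≤ L * (1 - t/2 + t^2/4) := by
      nlinarith [h2, mul_pos (mul_pos ha ht) ht, mul_pos (mul_pos (mul_pos ha ht) ht) ht,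
        mul_pos (mul_pos (mul_pos (mul_pos ha ht) ht) ht) ht]
    nlinarith [h3, h4, hTL]
  -- lower part
  have hdown : -(M * t * L) ≤ (a + b)/2 - L := by
    rcases le_total 1 t with h1t | h1t
    · have hMtL : L ≤ M * t * L := by
        nlinarith [mul_nonneg (sub_nonneg.mpr hM2) htL.le, mul_pos (mul_pos ht ht) hL,
          mul_nonneg (mul_nonneg (sub_nonneg.mpr h1t) ht.le) hL.le]
      nlinarith [hTL, htL, hMtL]
    · have hub := exp_ub' (x := t/2) (by linarith) (by linarith)
      rw [show 2*(t/2) = t by ring, hexp] at hub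
      have hba2 : b ≤ (1 + t + 2*(t/2)^2 + 4/3*(t/2)^3 + 5/6*(t/2)^4) * a :=
        (div_le_iff₀ ha).mp hub
      have hL3 : L ≤ a * (1 + t/2 + t^2/6 + 5/96*t^3) := by
        have h1 : t * L ≤ t * (a * (1 + t/2 + t^2/6 + 5/96*t^3)) := by nlinarith [hba2, hTL]
        exact le_of_mul_le_mul_left h1 ht
      rcases le_total (1 - t/2 - t^2/4) 0 with hc | hc
      · have h5 : L * (1 - t/2 - t^2/4) ≤ 0 := mul_nonpos_of_nonneg_of_nonpos hL.le hc
        nlinarith [h5, h4, ha, hTL]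
      · have h2 : L * (1 - t/2 - t^2/4) ≤ a * ((1 + t/2 + t^2/6 + 5/96*t^3) * (1 - t/2 - t^2/4)) := by
          nlinarith [mul_le_mul_of_nonneg_right hL3 hc]
        have h3 : L * (1 - t/2 - t^2/4) ≤ a := by
          nlinarith [h2, mul_pos (mul_pos ha ht) ht, mul_pos (mul_pos (mul_pos ha ht) ht) ht,
            mul_pos (mul_pos (mul_pos (mul_pos ha ht) ht) ht) ht,
            mul_pos (mul_pos (mul_pos (mul_pos (mul_pos ha ht) ht) ht) ht) ht]
        nlinarith [h3, h4, hTL]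
  exact abs_le.mpr ⟨by linarith, by linarith⟩

private lemma logMean_close {a b : ℝ} (ha : 0 < a) (hb : 0 < b) :
    |(a + b) / 2 - logMean a b| ≤
      max (1/2) |Real.log b - Real.log a| * |Real.log b - Real.log a| * logMean a b := by
  rcases lt_trichotomy a b with hab | hab | hab
  · have ht : 0 < Real.log b - Real.log a := sub_pos.mpr (Real.log_lt_log ha hab)
    rw [abs_of_pos ht]
    exact close_aux ha ht (by rw [Real.exp_sub, Real.exp_log ha, Real.exp_log hb])
      (logMean_mul ha hb) (logMean_pos ha hb)
  · subst hab; simp [logMean]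
  · have ht : 0 < Real.log a - Real.log b := sub_pos.mpr (Real.log_lt_log hb hab)
    rw [abs_sub_comm (Real.log b), abs_of_pos ht, add_comm a b, logMean_comm a b]
    exact close_aux hb ht (by rw [Real.exp_sub, Real.exp_log hb, Real.exp_log ha])
      (logMean_mul hb ha) (logMean_pos hb ha)


private lemma Ebound {ub t rb L M du X Y : ℝ} (hL : 0 < L) (hM0 : 0 ≤ M)
    (hX : 0 ≤ X) (hY : 0 ≤ Y) (hcl : |rb - L| ≤ M * |t| * L) :
    ub * t * (rb - L) + t ^ 2 * L * du / 4
      - (|ub| * M + |du| / 4) * (t ^ 2 * L + X + Y) ≤ 0 := by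
  have h1 : ub * t * (rb - L) ≤ |ub| * |t| * (M * |t| * L) := by
    have a1 : ub * t * (rb - L) ≤ |ub| * |t| * |rb - L| := by
      rw [← abs_mul, ← abs_mul]; exact le_abs_self _
    have a2 : |ub| * |t| * |rb - L| ≤ |ub| * |t| * (M * |t| * L) :=
      mul_le_mul_of_nonneg_left hcl (by positivity)
    linarith
  have h6 : |ub| * |t| * (M * |t| * L) = |ub| * M * (t ^ 2 * L) := by
    have h2 : |t| * |t| = t * t := abs_mul_abs_self t
    linear_combination (|ub| * M * L) * h2
  have h7 : t ^ 2 * L * du / 4 ≤ t ^ 2 * L * |du| / 4 := by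
    nlinarith [le_abs_self du, mul_nonneg (sq_nonneg t) hL.le]
  have h8 : 0 ≤ (|ub| * M + |du| / 4) * X := mul_nonneg (by positivity) hX
  have h9 : 0 ≤ (|ub| * M + |du| / 4) * Y := mul_nonneg (by positivity) hY
  nlinarith [h1, h6, h7, h8, h9]

/-- Tadmor entropy stability condition. -/
theorem tadmor_shuffle_condition (γ ρ₁ ρ₂ β₁ β₂ u₁ u₂ : ℝ) (hγ : 1 < γ)
    (hρ₁ : 0 < ρ₁) (hρ₂ : 0 < ρ₂) (hβ₁ : 0 < β₁) (hβ₂ : 0 < β₂)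
    (s₁ s₂ : ℝ)
    (hs₁ : s₁ = -Real.log β₁ - (γ - 1) * Real.log ρ₁ - Real.log 2)
    (hs₂ : s₂ = -Real.log β₂ - (γ - 1) * Real.log ρ₂ - Real.log 2)
    (w₁1 w₁2 w₁3 w₂1 w₂2 w₂3 : ℝ)
    (hw₁1 : w₁1 = γ / (γ - 1) - s₁ / (γ - 1) - β₁ * u₁ ^ 2)
    (hw₁2 : w₁2 = 2 * β₁ * u₁)
    (hw₁3 : w₁3 = -2 * β₁)
    (hw₂1 : w₂1 = γ / (γ - 1) - s₂ / (γ - 1) - β₂ * u₂ ^ 2)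
    (hw₂2 : w₂2 = 2 * β₂ * u₂)
    (hw₂3 : w₂3 = -2 * β₂)
    (ρbar ubar βbar mbar qbar : ℝ)
    (hρbar : ρbar = (ρ₁ + ρ₂) / 2)
    (hubar : ubar = (u₁ + u₂) / 2)
    (hβbar : βbar = (β₁ + β₂) / 2)
    (hmbar : mbar = (ρ₁ * u₁ + ρ₂ * u₂) / 2)
    (hqbar : qbar = (u₁ ^ 2 + u₂ ^ 2) / 2)
    (f1 f2 f3 : ℝ)
    (hf1 : f1 = mbar)
    (hf2 : f2 = ubar * mbar + ρbar / (2 * βbar))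
    (hf3 : f3 = mbar / (2 * (γ - 1) * logMean β₁ β₂) - (qbar / 2) * mbar
        + ubar ^ 2 * mbar + (ρbar / (2 * βbar)) * ubar)
    (lam : ℝ)
    (hlam : lam = |ubar| * max (1 / 2) |Real.log ρ₂ - Real.log ρ₁| + |u₂ - u₁| / 4)
    (pfrak g1 g2 g3 : ℝ)
    (hpfrak : pfrak = (ρ₂ - ρ₁) / (2 * logMean β₁ β₂) + (ρbar / 2) * (1 / β₂ - 1 / β₁))
    (hg1 : g1 = lam * (ρ₂ - ρ₁))
    (hg2 : g2 = lam * (ρ₂ * u₂ - ρ₁ * u₁))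
    (hg3 : g3 = lam * (pfrak / (γ - 1) + (1 / 2) * (ρ₂ * u₂ ^ 2 - ρ₁ * u₁ ^ 2)
        + (ubar ^ 2 - qbar) * (ρ₂ - ρ₁))) :
    (w₂1 - w₁1) * (f1 - g1) + (w₂2 - w₁2) * (f2 - g2) + (w₂3 - w₁3) * (f3 - g3)
      ≤ ρ₂ * u₂ - ρ₁ * u₁ := by
  subst hs₁ hs₂ hw₁1 hw₁2 hw₁3 hw₂1 hw₂2 hw₂3 hρbar hubar hβbar hmbar hqbar hf1 hf2 hf3 hlam hpfrak hg1 hg2 hg3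
  have hLRpos := logMean_pos hρ₁ hρ₂
  have hLBpos := logMean_pos hβ₁ hβ₂
  have hmρ := logMean_mul hρ₁ hρ₂
  have hmβ := logMean_mul hβ₁ hβ₂
  have hcl := logMean_close hρ₁ hρ₂
  obtain ⟨LR, hLRdef⟩ : ∃ x, logMean ρ₁ ρ₂ = x := ⟨_, rfl⟩
  rw [hLRdef] at hLRpos hmρ hcl
  obtain ⟨LB, hLBdef⟩ : ∃ x, logMean β₁ β₂ = x := ⟨_, rfl⟩
  rw [hLBdef] at hLBpos hmβ ⊢
  obtain ⟨lr1, hx1⟩ : ∃ x, Real.log ρ₁ = x := ⟨_, rfl⟩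
  obtain ⟨lr2, hx2⟩ : ∃ x, Real.log ρ₂ = x := ⟨_, rfl⟩
  obtain ⟨lb1, hx3⟩ : ∃ x, Real.log β₁ = x := ⟨_, rfl⟩
  obtain ⟨lb2, hx4⟩ : ∃ x, Real.log β₂ = x := ⟨_, rfl⟩
  obtain ⟨l2, hx5⟩ : ∃ x, Real.log 2 = x := ⟨_, rfl⟩
  rw [hx1, hx2] at hmρ hcl ⊢
  rw [hx3, hx4] at hmβ ⊢
  rw [hx5]
  clear hx1 hx2 hx3 hx4 hx5 hLRdef hLBdef
  have e2 : ρ₂ = ρ₁ + (lr2 - lr1) * LR := by linarith [hmρ]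
  subst e2
  have e3 : β₂ = β₁ + (lb2 - lb1) * LB := by linarith [hmβ]
  subst e3
  have hγ1 : γ - 1 ≠ 0 := by linarith
  have hb1 : β₁ ≠ 0 := ne_of_gt hβ₁
  have hb2 : β₁ + (lb2 - lb1) * LB ≠ 0 := ne_of_gt hβ₂
  have hbsum : β₁ + (β₁ + (lb2 - lb1) * LB) ≠ 0 := by
    have : (0:ℝ) < β₁ + (β₁ + (lb2 - lb1) * LB) := by linarith [hβ₁, hβ₂]
    exact ne_of_gt this
  have hLBne : LB ≠ 0 := ne_of_gt hLBpos
  have hrbar : (0:ℝ) < ((ρ₁ + (ρ₁ + (lr2 - lr1) * LR)) / 2) := by linarith [hρ₁, hρ₂]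
  have hbbar : (0:ℝ) < ((β₁ + (β₁ + (lb2 - lb1) * LB)) / 2) := by linarith [hβ₁, hβ₂]
  have hXpos : (0:ℝ) ≤ 2 * ((β₁ + (β₁ + (lb2 - lb1) * LB)) / 2) * ((ρ₁ + (ρ₁ + (lr2 - lr1) * LR)) / 2) * (u₂ - u₁) ^ 2 :=
    mul_nonneg (mul_nonneg (by linarith [hbbar]) hrbar.le) (sq_nonneg _)
  have hYpos : (0:ℝ) ≤ ((ρ₁ + (ρ₁ + (lr2 - lr1) * LR)) / 2) * ((lb2 - lb1) * LB) ^ 2 / ((γ - 1) * β₁ * (β₁ + (lb2 - lb1) * LB)) :=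
    div_nonneg (mul_nonneg hrbar.le (sq_nonneg _))
      (le_of_lt (mul_pos (mul_pos (by linarith : (0:ℝ) < γ - 1) hβ₁) hβ₂))
  have hdw1 : γ / (γ - 1) - (-lb2 - (γ - 1) * lr2 - l2) / (γ - 1) - (β₁ + (lb2 - lb1) * LB) * u₂ ^ 2 -
      (γ / (γ - 1) - (-lb1 - (γ - 1) * lr1 - l2) / (γ - 1) - β₁ * u₁ ^ 2)
      = ((lb2 - lb1) / (γ - 1) + (lr2 - lr1) - ((β₁ + (lb2 - lb1) * LB) * u₂ ^ 2 - β₁ * u₁ ^ 2)) := by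
    field_simp
    ring
  rw [hdw1]
  have split : ((lb2 - lb1) / (γ - 1) + (lr2 - lr1) - ((β₁ + (lb2 - lb1) * LB) * u₂ ^ 2 - β₁ * u₁ ^ 2)) *
        ((ρ₁ * u₁ + (ρ₁ + (lr2 - lr1) * LR) * u₂) / 2 -
          (|(u₁ + u₂) / 2| * (1 / 2 ⊔ |lr2 - lr1|) + |u₂ - u₁| / 4) * ((ρ₁ + (lr2 - lr1) * LR) - ρ₁)) +
      (2 * (β₁ + (lb2 - lb1) * LB) * u₂ - 2 * β₁ * u₁) *
        ((u₁ + u₂) / 2 * ((ρ₁ * u₁ + (ρ₁ + (lr2 - lr1) * LR) * u₂) / 2) + (ρ₁ + (ρ₁ + (lr2 - lr1) * LR)) / 2 / (2 * ((β₁ + (β₁ + (lb2 - lb1) * LB)) / 2)) -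
          (|(u₁ + u₂) / 2| * (1 / 2 ⊔ |lr2 - lr1|) + |u₂ - u₁| / 4) * ((ρ₁ + (lr2 - lr1) * LR) * u₂ - ρ₁ * u₁)) +
      (-2 * (β₁ + (lb2 - lb1) * LB) - -2 * β₁) *
        ((ρ₁ * u₁ + (ρ₁ + (lr2 - lr1) * LR) * u₂) / 2 / (2 * (γ - 1) * LB) -
            (u₁ ^ 2 + u₂ ^ 2) / 2 / 2 * ((ρ₁ * u₁ + (ρ₁ + (lr2 - lr1) * LR) * u₂) / 2) +
            ((u₁ + u₂) / 2) ^ 2 * ((ρ₁ * u₁ + (ρ₁ + (lr2 - lr1) * LR) * u₂) / 2) +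
            (ρ₁ + (ρ₁ + (lr2 - lr1) * LR)) / 2 / (2 * ((β₁ + (β₁ + (lb2 - lb1) * LB)) / 2)) * ((u₁ + u₂) / 2) -
          (|(u₁ + u₂) / 2| * (1 / 2 ⊔ |lr2 - lr1|) + |u₂ - u₁| / 4) *
            ((((ρ₁ + (lr2 - lr1) * LR) - ρ₁) / (2 * LB) + (ρ₁ + (ρ₁ + (lr2 - lr1) * LR)) / 2 / 2 * (1 / (β₁ + (lb2 - lb1) * LB) - 1 / β₁)) / (γ - 1) +
                1 / 2 * ((ρ₁ + (lr2 - lr1) * LR) * u₂ ^ 2 - ρ₁ * u₁ ^ 2) +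
              (((u₁ + u₂) / 2) ^ 2 - (u₁ ^ 2 + u₂ ^ 2) / 2) * ((ρ₁ + (lr2 - lr1) * LR) - ρ₁)))
      = (((lb2 - lb1) / (γ - 1) + (lr2 - lr1) - ((β₁ + (lb2 - lb1) * LB) * u₂ ^ 2 - β₁ * u₁ ^ 2)) * ((ρ₁ * u₁ + (ρ₁ + (lr2 - lr1) * LR) * u₂) / 2) + (2 * (β₁ + (lb2 - lb1) * LB) * u₂ - 2 * β₁ * u₁) * ((u₁ + u₂) / 2 * ((ρ₁ * u₁ + (ρ₁ + (lr2 - lr1) * LR) * u₂) / 2) + (ρ₁ + (ρ₁ + (lr2 - lr1) * LR)) / 2 / (2 * ((β₁ + (β₁ + (lb2 - lb1) * LB)) / 2))) + (-2 * (β₁ + (lb2 - lb1) * LB) - -2 * β₁) * (((ρ₁ * u₁ + (ρ₁ + (lr2 - lr1) * LR) * u₂) / 2) / (2 * (γ - 1) * LB) - (u₁ ^ 2 + u₂ ^ 2) / 2 / 2 * ((ρ₁ * u₁ + (ρ₁ + (lr2 - lr1) * LR) * u₂) / 2) + ((u₁ + u₂) / 2) ^ 2 * ((ρ₁ * u₁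 + (ρ₁ + (lr2 - lr1) * LR) * u₂) / 2) + (ρ₁ + (ρ₁ + (lr2 - lr1) * LR)) / 2 / (2 * ((β₁ + (β₁ + (lb2 - lb1) * LB)) / 2)) * ((u₁ + u₂) / 2)))
        - (|(u₁ + u₂) / 2| * (1 / 2 ⊔ |lr2 - lr1|) + |u₂ - u₁| / 4) * (((lb2 - lb1) / (γ - 1) + (lr2 - lr1) - ((β₁ + (lb2 - lb1) * LB) * u₂ ^ 2 - β₁ * u₁ ^ 2)) * ((ρ₁ + (lr2 - lr1) * LR) - ρ₁) + (2 * (β₁ + (lb2 - lb1) * LB) * u₂ - 2 * β₁ * u₁) * ((ρ₁ + (lr2 - lr1) * LR) * u₂ - ρ₁ * u₁) + (-2 * (β₁ + (lb2 - lb1) * LB) - -2 * β₁) * ((((ρ₁ + (lr2 - lr1) * LR) - ρ₁) / (2 * LB) + (ρ₁ + (ρ₁ + (lr2 - lr1) * LR)) / 2 / 2 * (1 / (β₁ + (lb2 - lb1) * LB) - 1 / β₁)) / (γ - 1) + 1 / 2 * ((ρ₁ + (lr2 - lr1) * LR) * u₂ ^ 2 - ρ₁ * u₁ ^ 2) + (((u₁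 + u₂) / 2) ^ 2 - (u₁ ^ 2 + u₂ ^ 2) / 2) * ((ρ₁ + (lr2 - lr1) * LR) - ρ₁))) := by
    ring
  rw [split]
  have keyF : ((lb2 - lb1) / (γ - 1) + (lr2 - lr1) - ((β₁ + (lb2 - lb1) * LB) * u₂ ^ 2 - β₁ * u₁ ^ 2)) * ((ρ₁ * u₁ + (ρ₁ + (lr2 - lr1) * LR) * u₂) / 2) + (2 * (β₁ + (lb2 - lb1) * LB) * u₂ - 2 * β₁ * u₁) * ((u₁ + u₂) / 2 * ((ρ₁ * u₁ + (ρ₁ + (lr2 - lr1) * LR) * u₂) / 2) + (ρ₁ + (ρ₁ + (lr2 - lr1) * LR)) / 2 / (2 * ((β₁ + (β₁ + (lb2 - lb1) * LB)) / 2))) + (-2 * (β₁ + (lb2 - lb1) * LB) - -2 * β₁) * (((ρ₁ * u₁ + (ρ₁ + (lr2 - lr1) * LR) * u₂) / 2) / (2 * (γ - 1) * LB) - (u₁ ^ 2 + u₂ ^ 2) / 2 / 2 * ((ρ₁ * u₁ + (ρ₁ + (lr2 - lr1) * LR) * u₂) / 2) + ((u₁ + u₂) / 2) ^ 2 * ((ρ₁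 * u₁ + (ρ₁ + (lr2 - lr1) * LR) * u₂) / 2) + (ρ₁ + (ρ₁ + (lr2 - lr1) * LR)) / 2 / (2 * ((β₁ + (β₁ + (lb2 - lb1) * LB)) / 2)) * ((u₁ + u₂) / 2)) - ((ρ₁ + (lr2 - lr1) * LR) * u₂ - ρ₁ * u₁) = ((u₁ + u₂) / 2) * (lr2 - lr1) * (((ρ₁ + (ρ₁ + (lr2 - lr1) * LR)) / 2) - LR) + (lr2 - lr1) ^ 2 * LR * (u₂ - u₁) / 4 := by
    field_simp
    ring
  have keyD : ((lb2 - lb1) / (γ - 1) + (lr2 - lr1) - ((β₁ + (lb2 - lb1) * LB) * u₂ ^ 2 - β₁ * u₁ ^ 2)) * ((ρ₁ + (lr2 - lr1) * LR) - ρ₁) + (2 * (β₁ + (lb2 - lb1) * LB) * u₂ - 2 * β₁ * u₁) * ((ρ₁ + (lr2 - lr1) * LR) * u₂ - ρ₁ * u₁) + (-2 * (β₁ + (lb2 - lb1) * LB) - -2 * β₁) * ((((ρ₁ + (lr2 - lr1) * LR) - ρ₁) / (2 * LB) + (ρ₁ + (ρ₁ + (lr2 - lr1) * LR)) / 2 /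 2 * (1 / (β₁ + (lb2 - lb1) * LB) - 1 / β₁)) / (γ - 1) + 1 / 2 * ((ρ₁ + (lr2 - lr1) * LR) * u₂ ^ 2 - ρ₁ * u₁ ^ 2) + (((u₁ + u₂) / 2) ^ 2 - (u₁ ^ 2 + u₂ ^ 2) / 2) * ((ρ₁ + (lr2 - lr1) * LR) - ρ₁)) = (lr2 - lr1) ^ 2 * LR + 2 * ((β₁ + (β₁ + (lb2 - lb1) * LB)) / 2) * ((ρ₁ + (ρ₁ + (lr2 - lr1) * LR)) / 2) * (u₂ - u₁) ^ 2 + ((ρ₁ + (ρ₁ + (lr2 - lr1) * LR)) / 2) * ((lb2 - lb1) * LB) ^ 2 / ((γ - 1) * β₁ * (β₁ + (lb2 - lb1) * LB)) := by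
    field_simp
    ring
  have keyD' : (|(u₁ + u₂) / 2| * (1 / 2 ⊔ |lr2 - lr1|) + |u₂ - u₁| / 4) * (((lb2 - lb1) / (γ - 1) + (lr2 - lr1) - ((β₁ + (lb2 - lb1) * LB) * u₂ ^ 2 - β₁ * u₁ ^ 2)) * ((ρ₁ + (lr2 - lr1) * LR) - ρ₁) + (2 * (β₁ + (lb2 - lb1) * LB) * u₂ - 2 * β₁ * u₁) * ((ρ₁ + (lr2 - lr1) * LR) * u₂ - ρ₁ * u₁) + (-2 * (β₁ + (lb2 - lb1) * LB) - -2 * β₁) * ((((ρ₁ + (lr2 - lr1) * LR) - ρ₁) / (2 * LB) + (ρ₁ + (ρ₁ + (lr2 - lr1) * LR)) / 2 / 2 * (1 / (β₁ + (lb2 - lb1) * LB) - 1 / β₁)) / (γ - 1) + 1 / 2 * ((ρ₁ + (lr2 - lr1) * LR) * u₂ ^ 2 - ρ₁ * u₁ ^ 2) + (((u₁ + u₂) / 2) ^ 2 - (u₁ ^ 2 + u₂ ^ 2) / 2) * ((ρ₁ + (lr2 - lr1) * LR) - ρ₁)))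
      = (|(u₁ + u₂) / 2| * (1 / 2 ⊔ |lr2 - lr1|) + |u₂ - u₁| / 4) * ((lr2 - lr1) ^ 2 * LR + 2 * ((β₁ + (β₁ + (lb2 - lb1) * LB)) / 2) * ((ρ₁ + (ρ₁ + (lr2 - lr1) * LR)) / 2) * (u₂ - u₁) ^ 2 + ((ρ₁ + (ρ₁ + (lr2 - lr1) * LR)) / 2) * ((lb2 - lb1) * LB) ^ 2 / ((γ - 1) * β₁ * (β₁ + (lb2 - lb1) * LB))) := by rw [keyD]
  have hE := Ebound (ub := (u₁ + u₂) / 2) (t := lr2 - lr1) (rb := ((ρ₁ + (ρ₁ + (lr2 - lr1) * LR)) / 2)) (L := LR)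
    (M := 1 / 2 ⊔ |lr2 - lr1|) (du := u₂ - u₁) (X := 2 * ((β₁ + (β₁ + (lb2 - lb1) * LB)) / 2) * ((ρ₁ + (ρ₁ + (lr2 - lr1) * LR)) / 2) * (u₂ - u₁) ^ 2) (Y := ((ρ₁ + (ρ₁ + (lr2 - lr1) * LR)) / 2) * ((lb2 - lb1) * LB) ^ 2 / ((γ - 1) * β₁ * (β₁ + (lb2 - lb1) * LB)))
    hLRpos (by positivity) hXpos hYpos hcl
  linarith [keyF, keyD', hE]
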